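/- arXiv:1802.07090 — 2 statements merged into one kernel-verified Lean document; each statement's English description precedes it below -/
import Mathlib

section
/- Let C be a cycle of length ℓ ≥ 4 in a tournament T, and suppose C belongs to a set 𝒞 of k arc-disjoint cycles in T that minimizes the total length ∑_{C'∈𝒞} |C'|. Then for every pair of non-consecutive vertices v_i, v_j of C, the arc of T between v_i and v_j belongs to some cycle of 𝒞 other than C. -/
variable {V : Type*}

/-- A directed cycle in the digraph with arc relation `A`: a nonempty duplicate-free
list of at least two vertices such that every cyclically-consecutive pair is an arc. -/
structure DCycle (A : V → V → Prop) where
  verts : List V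
  two_le : 2 ≤ verts.length
  nodup : verts.Nodup
  arcs_rel : ∀ p ∈ verts.zip (verts.rotate 1), A p.1 p.2

/-- The set of arcs of a cycle (cyclically consecutive pairs of its vertex list). -/
def DCycle.arcs {A : V → V → Prop} (c : DCycle A) : Set (V × V) :=
  {p | p ∈ c.verts.zip (c.verts.rotate 1)}

/-- Two cycles are arc-disjoint if they share no arc. -/
def ArcDisjoint {A : V → V → Prop} (c₁ c₂ : DCycle A) : Prop :=
  Disjoint c₁.arcs c₂.arcs

/-- A tournament: irreflexive, and between any two distinct vertices exactly one arc. -/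
def IsTournament (A : V → V → Prop) : Prop :=
  (∀ v, ¬ A v v) ∧ ∀ u v : V, u ≠ v → (A u v ↔ ¬ A v u)

/-- `F` is a feedback arc set of the digraph with arc relation `A`. -/
def IsFAS (A : V → V → Prop) (F : Set (V × V)) : Prop :=
  (∀ p ∈ F, A p.1 p.2) ∧ IsEmpty (DCycle (fun u v => A u v ∧ (u, v) ∉ F))

/-!
Orient the chord between `u` and `w` as `u → w`, using that `T` is a tournament. If no other
cycle of the family used it, then following `c i₀` from `w` to `u` and closing the path with
`u → w` would give a cycle made of that chord and arcs of `c i₀`; it is strictly shorter because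
`u → w` is not an arc of `c i₀`, and it is arc-disjoint from the other cycles. Swapping it for
`c i₀` would decrease the total length.
-/

namespace List

variable {α : Type*} {L : List α} {p : α × α}

theorem mem_zip_rotate_one_iff :
    p ∈ L.zip (L.rotate 1) ↔ ∃ i, ∃ h : i < L.length,
      p = (L[i], L[(i + 1) % L.length]'(Nat.mod_lt _ (Nat.zero_lt_of_lt h))) := by
  simp [List.mem_iff_getElem, List.getElem_rotate, eq_comm]

theorem mem_zip_rotate_one_rotate (m : ℕ) :
    p ∈ (L.rotate m).zip ((L.rotate m).rotate 1) ↔ p ∈ L.zip (L.rotate 1) := by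
  rw [rotate_rotate, add_comm, ← rotate_rotate, zip_eq_zipWith,
    ← zipWith_rotate_distrib _ _ _ _ (length_rotate L 1).symm, mem_rotate, zip_eq_zipWith]

theorem mem_zip_rotate_one_take {t : ℕ} (ht : t < L.length)
    (hp : p ∈ (L.take (t + 1)).zip ((L.take (t + 1)).rotate 1)) :
    p ∈ L.zip (L.rotate 1) ∨ p = (L[t], L[0]) := by
  have hlen : (L.take (t + 1)).length = t + 1 := by simp only [List.length_take]; omega
  obtain ⟨i, hi, rfl⟩ := mem_zip_rotate_one_iff.mp hp
  rcases (show i ≤ t by omega).lt_or_eq with hit | rfl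
  · refine .inl (mem_zip_rotate_one_iff.mpr ⟨i, by omega, ?_⟩)
    simp only [getElem_take, hlen, Nat.mod_eq_of_lt (show i + 1 < t + 1 by omega),
      Nat.mod_eq_of_lt (show i + 1 < L.length by omega)]
  · right
    simp only [getElem_take, hlen, Nat.mod_self]

end List

namespace DCycle

variable {A : V → V → Prop}

def rotate (c : DCycle A) (m : ℕ) : DCycle A where
  verts := c.verts.rotate m
  two_le := (c.verts.length_rotate m).symm ▸ c.two_le
  nodup := List.nodup_rotate.mpr c.nodup
  arcs_rel p hp := c.arcs_rel p (List.mem_zip_rotate_one_rotate m |>.mp hp)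

theorem arcs_rotate (c : DCycle A) (m : ℕ) : (c.rotate m).arcs = c.arcs :=
  Set.ext fun _ => List.mem_zip_rotate_one_rotate m

theorem exists_rotate_head?_eq (c : DCycle A) {w : V} (hw : w ∈ c.verts) :
    ∃ c' : DCycle A, c'.verts ~r c.verts ∧ c'.arcs = c.arcs ∧ c'.verts.head? = some w := by
  obtain ⟨m, hm, rfl⟩ := List.mem_iff_getElem.mp hw
  exact ⟨c.rotate m, List.IsRotated.symm ⟨m, rfl⟩, c.arcs_rotate m,
    (List.head?_rotate hm).trans (List.getElem?_eq_getElem hm)⟩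

def shortcut (c : DCycle A) (t : ℕ) (ht : 0 < t) (htn : t < c.verts.length)
    (hA : A c.verts[t] c.verts[0]) : DCycle A where
  verts := c.verts.take (t + 1)
  two_le := by simp only [List.length_take]; omega
  nodup := c.nodup.sublist (List.take_sublist _ _)
  arcs_rel p hp := by
    rcases List.mem_zip_rotate_one_take htn hp with hp | rfl
    exacts [c.arcs_rel p hp, hA]

theorem length_shortcut (c : DCycle A) (t : ℕ) (ht : 0 < t) (htn : t < c.verts.length)
    (hA : A c.verts[t] c.verts[0]) : (c.shortcut t ht htn hA).verts.length = t + 1 := by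
  simp only [shortcut, List.length_take]; omega

theorem arcs_shortcut_subset (c : DCycle A) (t : ℕ) (ht : 0 < t) (htn : t < c.verts.length)
    (hA : A c.verts[t] c.verts[0]) :
    (c.shortcut t ht htn hA).arcs ⊆ insert (c.verts[t], c.verts[0]) c.arcs := fun _ hp =>
  (List.mem_zip_rotate_one_take htn hp).symm

theorem exists_shorter_of_chord_to_head (c : DCycle A) {u w : V} (hu : u ∈ c.verts)
    (hw : c.verts.head? = some w) (huw : u ≠ w) (hA : A u w) (hnot : (u, w) ∉ c.arcs) :
    ∃ d : DCycle A, d.arcs ⊆ insert (u, w) c.arcs ∧ d.verts.length < c.verts.length := by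
  obtain ⟨t, ht, rfl⟩ := List.mem_iff_getElem.mp hu
  obtain rfl : c.verts[0] = w := by
    rw [List.head?_eq_getElem?, List.getElem?_eq_getElem (by omega)] at hw
    exact Option.some_inj.mp hw
  have ht0 : 0 < t := Nat.pos_of_ne_zero fun h0 => huw (by simp only [h0])
  have htn : t + 1 < c.verts.length := by
    by_contra! hge
    refine hnot (List.mem_zip_rotate_one_iff.mpr ⟨t, ht, ?_⟩)
    simp only [show t + 1 = c.verts.length by omega, Nat.mod_self]
  refine ⟨c.shortcut t ht0 ht hA, c.arcs_shortcut_subset t ht0 ht hA, ?_⟩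
  rw [length_shortcut]
  exact htn

theorem exists_shorter_of_chord (c : DCycle A) {u w : V} (hu : u ∈ c.verts)
    (hw : w ∈ c.verts) (huw : u ≠ w) (hA : A u w) (hnot : (u, w) ∉ c.arcs) :
    ∃ d : DCycle A, d.arcs ⊆ insert (u, w) c.arcs ∧ d.verts.length < c.verts.length := by
  obtain ⟨c', hrot, harcs, hhead⟩ := c.exists_rotate_head?_eq hw
  rw [← harcs, ← hrot.perm.length_eq]
  exact c'.exists_shorter_of_chord_to_head (hrot.mem_iff.mpr hu) hhead huw hA (harcs ▸ hnot)

end DCycle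

section MinimalFamily

variable {A : V → V → Prop} {k : ℕ} {c : Fin k → DCycle A}

theorem ArcDisjoint.symm {c₁ c₂ : DCycle A} (h : ArcDisjoint c₁ c₂) : ArcDisjoint c₂ c₁ :=
  Disjoint.symm h

theorem pairwise_arcDisjoint_update (hdisj : ∀ i j, i ≠ j → ArcDisjoint (c i) (c j))
    {i₀ : Fin k} {d : DCycle A} (hd : ∀ j, j ≠ i₀ → ArcDisjoint d (c j)) :
    ∀ i j, i ≠ j → ArcDisjoint (Function.update c i₀ d i) (Function.update c i₀ d j) := by
  intro i j hij
  rcases eq_or_ne i i₀ with rfl | hi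
  · simpa [Function.update_of_ne hij.symm] using hd j hij.symm
  rcases eq_or_ne j i₀ with rfl | hj
  · simpa [Function.update_of_ne hi] using (hd i hi).symm
  simpa [Function.update_of_ne hi, Function.update_of_ne hj] using hdisj i j hij

theorem length_le_of_arcDisjoint_of_minimal (hdisj : ∀ i j, i ≠ j → ArcDisjoint (c i) (c j))
    (hmin : ∀ c' : Fin k → DCycle A, (∀ i j, i ≠ j → ArcDisjoint (c' i) (c' j)) →
      ∑ i, (c i).verts.length ≤ ∑ i, (c' i).verts.length)
    (i₀ : Fin k) {d : DCycle A} (hd : ∀ j, j ≠ i₀ → ArcDisjoint d (c j)) :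
    (c i₀).verts.length ≤ d.verts.length := by
  have hle := hmin _ (pairwise_arcDisjoint_update hdisj hd)
  have hrest : ∑ j ∈ Finset.univ.erase i₀, (Function.update c i₀ d j).verts.length =
      ∑ j ∈ Finset.univ.erase i₀, (c j).verts.length :=
    Finset.sum_congr rfl fun j hj => by rw [Function.update_of_ne (Finset.ne_of_mem_erase hj)]
  rw [← Finset.add_sum_erase _ _ (Finset.mem_univ i₀),
    ← Finset.add_sum_erase _ _ (Finset.mem_univ i₀), Function.update_self, hrest] at hle
  omega

theorem exists_ne_mem_arcs_of_chord (hdisj : ∀ i j, i ≠ j → ArcDisjoint (c i) (c j))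
    (hmin : ∀ c' : Fin k → DCycle A, (∀ i j, i ≠ j → ArcDisjoint (c' i) (c' j)) →
      ∑ i, (c i).verts.length ≤ ∑ i, (c' i).verts.length)
    (i₀ : Fin k) {u w : V} (hu : u ∈ (c i₀).verts) (hw : w ∈ (c i₀).verts) (huw : u ≠ w)
    (hA : A u w) (hnot : (u, w) ∉ (c i₀).arcs) :
    ∃ j, j ≠ i₀ ∧ (u, w) ∈ (c j).arcs := by
  by_contra! hfree
  obtain ⟨d, hdarcs, hdlen⟩ := (c i₀).exists_shorter_of_chord hu hw huw hA hnot
  have hd : ∀ j, j ≠ i₀ → ArcDisjoint d (c j) := by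
    refine fun j hj => Set.disjoint_left.mpr fun p hpd hpj => ?_
    rcases hdarcs hpd with rfl | hp
    exacts [hfree j hj hpj, Set.disjoint_left.mp (hdisj i₀ j hj.symm) hp hpj]
  exact (length_le_of_arcDisjoint_of_minimal hdisj hmin i₀ hd).not_gt hdlen

end MinimalFamily

theorem stmt2_general (A : V → V → Prop) (hT : IsTournament A) (k : ℕ)
    (c : Fin k → DCycle A) (hdisj : ∀ i j, i ≠ j → ArcDisjoint (c i) (c j))
    (hmin : ∀ c' : Fin k → DCycle A, (∀ i j, i ≠ j → ArcDisjoint (c' i) (c' j)) →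
      ∑ i, (c i).verts.length ≤ ∑ i, (c' i).verts.length)
    (i₀ : Fin k)
    (u w : V) (hu : u ∈ (c i₀).verts) (hw : w ∈ (c i₀).verts) (huw : u ≠ w)
    (h1 : (u, w) ∉ (c i₀).arcs) (h2 : (w, u) ∉ (c i₀).arcs) :
    ∃ j, j ≠ i₀ ∧ ((u, w) ∈ (c j).arcs ∨ (w, u) ∈ (c j).arcs) := by
  by_cases hA : A u w
  · obtain ⟨j, hj, hmem⟩ := exists_ne_mem_arcs_of_chord hdisj hmin i₀ hu hw huw hA h1
    exact ⟨j, hj, .inl hmem⟩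
  · have hA' : A w u := (hT.2 w u huw.symm).mpr hA
    obtain ⟨j, hj, hmem⟩ := exists_ne_mem_arcs_of_chord hdisj hmin i₀ hw hu huw.symm hA' h2
    exact ⟨j, hj, .inr hmem⟩

/-- In a minimum-total-length family of `k` arc-disjoint cycles in a tournament,
for any cycle `c i₀` of length at least 4 and any pair of non-consecutive vertices
`u, w` on it, the arc of the tournament between `u` and `w` lies in some other
cycle of the family. -/
theorem stmt2 [Fintype V] (A : V → V → Prop) (hT : IsTournament A) (k : ℕ)
    (c : Fin k → DCycle A) (hdisj : ∀ i j, i ≠ j → ArcDisjoint (c i) (c j))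
    (hmin : ∀ c' : Fin k → DCycle A, (∀ i j, i ≠ j → ArcDisjoint (c' i) (c' j)) →
      ∑ i, (c i).verts.length ≤ ∑ i, (c' i).verts.length)
    (i₀ : Fin k) (h4 : 4 ≤ (c i₀).verts.length)
    (u w : V) (hu : u ∈ (c i₀).verts) (hw : w ∈ (c i₀).verts) (huw : u ≠ w)
    (h1 : (u, w) ∉ (c i₀).arcs) (h2 : (w, u) ∉ (c i₀).arcs) :
    ∃ j, j ≠ i₀ ∧ ((u, w) ∈ (c j).arcs ∨ (w, u) ∈ (c j).arcs) :=
  stmt2_general A hT k c hdisj hmin i₀ u w hu hw huw h1 h2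
end

section
/- For every non-negative integer k, every tournament T either contains k pairwise arc-disjoint cycles or has a feedback arc set of size at most (2k+1)(k-1). -/
variable {V : Type*}

/-!
Choose arc-disjoint cycles greedily, each time a shortest cycle of `T - F`, where `F` is the set of
arcs used so far. A shortest cycle of length `ℓ` has no chord in `T - F`, so, `T` being a
tournament, each of its `ℓ(ℓ - 3)/2` chords carries an arc of `F`: `ℓ(ℓ - 3) ≤ 2|F|`. By induction
the first `r` cycles have total length at most `r(r + 2)`, whence the next one has length at most
`2r + 3`. If `T - F` is acyclic after `r < k` steps, `F` is a feedback arc set with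
`|F| ≤ r(r + 2) ≤ (k - 1)(k + 1) ≤ (2k + 1)(k - 1)`.
-/

lemma List.mem_zip_rotate_one_iff_s3 {l : List V} {p : V × V} :
    p ∈ l.zip (l.rotate 1) ↔ ∃ i, ∃ h : i < l.length,
      p = (l[i], l[(i + 1) % l.length]'(Nat.mod_lt _ (Nat.zero_lt_of_lt h))) := by
  simp only [List.mem_iff_getElem, List.length_zip, List.length_rotate, Nat.min_self,
    List.getElem_zip, List.getElem_rotate]
  exact ⟨fun ⟨i, h, he⟩ => ⟨i, h, he.symm⟩, fun ⟨i, h, he⟩ => ⟨i, h, he.symm⟩⟩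

namespace DCycle

variable {A B : V → V → Prop}

lemma length_pos (c : DCycle A) : 0 < c.verts.length := by
  have := c.two_le
  omega

def vertex (c : DCycle A) (i : ℕ) : V :=
  c.verts[i % c.verts.length]'(Nat.mod_lt _ c.length_pos)

lemma vertex_eq_vertex_iff (c : DCycle A) {i j : ℕ} :
    c.vertex i = c.vertex j ↔ i % c.verts.length = j % c.verts.length :=
  c.nodup.getElem_inj_iff

lemma vertex_add_length (c : DCycle A) (i : ℕ) : c.vertex (i + c.verts.length) = c.vertex i := by
  rw [vertex_eq_vertex_iff, Nat.add_mod_right]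

lemma vertex_add_eq_vertex_add_iff (c : DCycle A) (i : ℕ) {t t' : ℕ}
    (ht : t < c.verts.length) (ht' : t' < c.verts.length) :
    c.vertex (i + t) = c.vertex (i + t') ↔ t = t' := by
  rw [vertex_eq_vertex_iff]
  exact ⟨fun h => (Nat.ModEq.add_left_cancel' i h).eq_of_lt_of_lt ht ht', fun h => h ▸ rfl⟩

lemma rel_vertex_succ (c : DCycle A) (i : ℕ) : A (c.vertex i) (c.vertex (i + 1)) := by
  refine c.arcs_rel (c.vertex i, c.vertex (i + 1))
    (List.mem_zip_rotate_one_iff_s3.2 ⟨i % c.verts.length, Nat.mod_lt _ c.length_pos, ?_⟩)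
  simp only [vertex, Nat.mod_add_mod]

def ofFn (n : ℕ) (hn : 2 ≤ n) (f : ℕ → V) (hf : Set.InjOn f (Set.Iio n))
    (hrel : ∀ i < n, A (f i) (f ((i + 1) % n))) : DCycle A where
  verts := (List.range n).map f
  two_le := by simpa using hn
  nodup := List.nodup_range.map_on fun x hx y hy => hf (by simpa using hx) (by simpa using hy)
  arcs_rel := by
    intro p hp
    obtain ⟨i, h, rfl⟩ := List.mem_zip_rotate_one_iff_s3.1 hp
    simp only [List.length_map, List.length_range] at h
    simpa using hrel i h

lemma length_ofFn (n : ℕ) (hn : 2 ≤ n) (f : ℕ → V) (hf) (hrel) :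
    (ofFn (A := A) n hn f hf hrel).verts.length = n := by
  simp [ofFn]

def mono (h : ∀ u v, A u v → B u v) (c : DCycle A) : DCycle B :=
  ⟨c.verts, c.two_le, c.nodup, fun p hp => h _ _ (c.arcs_rel p hp)⟩

def IsShortest (c : DCycle A) : Prop :=
  ∀ c' : DCycle A, c.verts.length ≤ c'.verts.length

lemma exists_isShortest [Nonempty (DCycle A)] : ∃ c : DCycle A, c.IsShortest :=
  ⟨Function.argmin fun c : DCycle A => c.verts.length,
    fun c' => Function.argmin_le (fun c : DCycle A => c.verts.length) c'⟩

/-- A backward chord from `vertex (i + d)` to `vertex i` closes the cycle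
`vertex i → ⋯ → vertex (i + d) → vertex i` of length `d + 1`. -/
lemma exists_length_eq_of_rel_vertex_add (c : DCycle A) {i d : ℕ} (hd : 1 ≤ d)
    (hdL : d < c.verts.length) (h : A (c.vertex (i + d)) (c.vertex i)) :
    ∃ c' : DCycle A, c'.verts.length = d + 1 := by
  refine ⟨ofFn (d + 1) (by omega) (fun j => c.vertex (i + j)) ?_ ?_, length_ofFn ..⟩
  · intro a ha b hb hab
    exact (c.vertex_add_eq_vertex_add_iff i (by simp at ha; omega) (by simp at hb; omega)).1 hab
  · intro j hj
    rcases Nat.lt_or_ge j d with hjd | hjd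
    · rw [Nat.mod_eq_of_lt (by omega), ← Nat.add_assoc]
      exact c.rel_vertex_succ (i + j)
    · obtain rfl : j = d := by omega
      simpa using h

lemma IsShortest.not_rel_vertex_add {c : DCycle A} (hc : c.IsShortest) (i : ℕ) {d : ℕ}
    (hd : 1 ≤ d) (hdL : d + 1 < c.verts.length) : ¬ A (c.vertex (i + d)) (c.vertex i) := by
  intro h
  obtain ⟨c', hc'⟩ := c.exists_length_eq_of_rel_vertex_add hd (by omega) h
  have := hc c'
  omega

/-- Forward chords are excluded too: going forward by `d` is going backward by `ℓ - d`. -/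
lemma IsShortest.not_rel_vertex_vertex_add {c : DCycle A} (hc : c.IsShortest) (i : ℕ) {d : ℕ}
    (hd : 2 ≤ d) (hdL : d + 1 < c.verts.length) : ¬ A (c.vertex i) (c.vertex (i + d)) := by
  have h := hc.not_rel_vertex_add (i + d) (d := c.verts.length - d) (by omega) (by omega)
  rwa [show i + d + (c.verts.length - d) = i + c.verts.length by omega, vertex_add_length] at h

variable [DecidableEq V]

def arcFinset (c : DCycle A) : Finset (V × V) :=
  (c.verts.zip (c.verts.rotate 1)).toFinset

lemma mem_arcFinset {c : DCycle A} {p : V × V} : p ∈ c.arcFinset ↔ p ∈ c.arcs :=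
  List.mem_toFinset

lemma card_arcFinset_le (c : DCycle A) : c.arcFinset.card ≤ c.verts.length :=
  (List.toFinset_card_le _).trans (by simp)

end DCycle

lemma Fin.pairwise_snoc {α : Type*} {R : α → α → Prop} {n : ℕ} {f : Fin n → α} {a : α}
    (hf : Pairwise fun i j => R (f i) (f j)) (ha : ∀ i, R (f i) a) (ha' : ∀ i, R a (f i)) :
    Pairwise fun i j =>
      R (Fin.snoc (α := fun _ => α) f a i) (Fin.snoc (α := fun _ => α) f a j) := by
  intro i j hij
  rcases Fin.eq_castSucc_or_eq_last i with ⟨i, rfl⟩ | rfl <;>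
    rcases Fin.eq_castSucc_or_eq_last j with ⟨j, rfl⟩ | rfl
  · simpa using hf (ne_of_apply_ne Fin.castSucc hij)
  · simpa using ha i
  · simpa using ha' j
  · exact absurd rfl hij

def deleteArcs (A : V → V → Prop) (F : Set (V × V)) : V → V → Prop :=
  fun u v => A u v ∧ (u, v) ∉ F

namespace IsTournament

variable {A : V → V → Prop}

lemma rel_or_rel (hT : IsTournament A) {u v : V} (h : u ≠ v) : A u v ∨ A v u :=
  or_iff_not_imp_left.2 (hT.2 v u h.symm).2

/-- No chord of a shortest cycle of `T - F` is an arc of `T - F`, so each of them lies in `F` in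
one of its two directions. The `ℓ (ℓ - 3)` pairs `(i, d)` with `2 ≤ d ≤ ℓ - 2` thus inject into
the set of arcs of `F` and their reverses. -/
lemma length_mul_length_sub_three_le [DecidableEq V] (hT : IsTournament A) (F : Finset (V × V))
    {c : DCycle (deleteArcs A F)} (hc : c.IsShortest) :
    c.verts.length * (c.verts.length - 3) ≤ 2 * F.card := by
  set L := c.verts.length
  have hchord : ∀ i, ∀ d ∈ Finset.Icc 2 (L - 2),
      (c.vertex i, c.vertex (i + d)) ∈ F ∪ F.image Prod.swap := by
    intro i d hd
    rw [Finset.mem_Icc] at hd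
    have hne : c.vertex (i + 0) ≠ c.vertex (i + d) := by
      rw [Ne, c.vertex_add_eq_vertex_add_iff i c.length_pos (by omega)]
      omega
    have hfwd := hc.not_rel_vertex_vertex_add i hd.1 (by omega)
    have hbwd := hc.not_rel_vertex_add i (d := d) (by omega) (by omega)
    simp only [deleteArcs, Finset.mem_coe, not_and, not_not] at hfwd hbwd
    rw [Nat.add_zero] at hne
    rcases hT.rel_or_rel hne with h | h
    · exact Finset.mem_union_left _ (hfwd h)
    · exact Finset.mem_union_right _ (Finset.mem_image.2 ⟨_, hbwd h, rfl⟩)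
  have hinj : Set.InjOn (fun p : ℕ × ℕ => (c.vertex p.1, c.vertex (p.1 + p.2)))
      (Finset.range L ×ˢ Finset.Icc 2 (L - 2) : Finset (ℕ × ℕ)) := by
    rintro ⟨i, d⟩ hid ⟨i', d'⟩ hid' h
    simp only [Finset.coe_product, Set.mem_prod, Finset.coe_range, Set.mem_Iio, Finset.coe_Icc,
      Set.mem_Icc, Prod.mk.injEq] at hid hid' h
    obtain rfl : i = i' := by
      rw [DCycle.vertex_eq_vertex_iff, Nat.mod_eq_of_lt hid.1, Nat.mod_eq_of_lt hid'.1] at h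
      exact h.1
    rw [c.vertex_add_eq_vertex_add_iff i (by omega) (by omega)] at h
    rw [h.2]
  calc L * (L - 3) = (Finset.range L ×ˢ Finset.Icc 2 (L - 2)).card := by
        rw [Finset.card_product, Finset.card_range, Nat.card_Icc,
          show L - 2 + 1 - 2 = L - 3 by omega]
    _ ≤ (F ∪ F.image Prod.swap).card :=
        Finset.card_le_card_of_injOn _ (fun p hp => hchord _ _ (Finset.mem_product.1 hp).2) hinj
    _ ≤ F.card + (F.image Prod.swap).card := Finset.card_union_le _ _
    _ ≤ 2 * F.card := by
        have := F.card_image_le (f := Prod.swap)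
        omega

lemma isFAS_or_exists_cycle [DecidableEq V] (hT : IsTournament A) (F : Finset (V × V))
    (hF : ∀ p ∈ F, A p.1 p.2) :
    IsFAS A F ∨ ∃ c : DCycle A, Disjoint c.arcs F ∧
      c.verts.length * (c.verts.length - 3) ≤ 2 * F.card := by
  rcases isEmpty_or_nonempty (DCycle (deleteArcs A F)) with h | h
  · exact Or.inl ⟨hF, h⟩
  obtain ⟨c, hc⟩ := DCycle.exists_isShortest (A := deleteArcs A F)
  refine Or.inr ⟨c.mono fun _ _ h => h.1, Set.disjoint_left.2 fun p hp => (c.arcs_rel p hp).2,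
    hT.length_mul_length_sub_three_le F hc⟩

lemma length_le_of_mul_sub_three_le {ℓ r : ℕ} (h : ℓ * (ℓ - 3) ≤ 2 * (r * (r + 2))) :
    ℓ ≤ 2 * r + 3 := by
  by_contra! hℓ
  obtain ⟨t, rfl⟩ : ∃ t, ℓ = t + 3 := ⟨ℓ - 3, by omega⟩
  rw [Nat.add_sub_cancel] at h
  nlinarith

theorem exists_arcDisjoint_cycles_or_isFAS (hT : IsTournament A) (r : ℕ) :
    (∃ c : Fin r → DCycle A, Pairwise (fun i j => ArcDisjoint (c i) (c j)) ∧
      ∑ i, (c i).verts.length ≤ r * (r + 2)) ∨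
    ∃ F : Set (V × V), IsFAS A F ∧ F.ncard ≤ (r - 1) * (r + 1) := by
  classical
  induction r with
  | zero => exact Or.inl ⟨Fin.elim0, fun i => i.elim0, by simp⟩
  | succ r ih =>
    obtain ⟨c, hdisj, hsum⟩ | ⟨F, hF, hcard⟩ := ih
    swap
    · exact Or.inr ⟨F, hF, hcard.trans (Nat.mul_le_mul (by omega) (by omega))⟩
    set F := Finset.univ.biUnion fun i => (c i).arcFinset
    have hFcard : F.card ≤ r * (r + 2) :=
      Finset.card_biUnion_le.trans
        ((Finset.sum_le_sum fun i _ => (c i).card_arcFinset_le).trans hsum)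
    have hFrel : ∀ p ∈ F, A p.1 p.2 := by
      intro p hp
      obtain ⟨i, -, hi⟩ := Finset.mem_biUnion.1 hp
      exact (c i).arcs_rel p (DCycle.mem_arcFinset.1 hi)
    obtain hFAS | ⟨c', hc'F, hc'len⟩ := hT.isFAS_or_exists_cycle F hFrel
    · exact Or.inr ⟨F, hFAS, by simpa using hFcard⟩
    have hc'arcs : ∀ i, ArcDisjoint (c i) c' := fun i =>
      Set.disjoint_left.2 fun p hp hp' => Set.disjoint_left.1 hc'F hp'
        (Finset.mem_coe.2 (Finset.mem_biUnion.2 ⟨i, Finset.mem_univ _, DCycle.mem_arcFinset.2 hp⟩))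
    have hc'short : c'.verts.length ≤ 2 * r + 3 :=
      length_le_of_mul_sub_three_le (hc'len.trans (by omega))
    refine Or.inl ⟨Fin.snoc c c', Fin.pairwise_snoc hdisj hc'arcs fun i => (hc'arcs i).symm, ?_⟩
    rw [Fin.sum_univ_castSucc]
    simp only [Fin.snoc_castSucc, Fin.snoc_last]
    nlinarith

end IsTournament

theorem stmt3_general (A : V → V → Prop) (hT : IsTournament A) (k : ℕ) :
    (∃ c : Fin k → DCycle A, ∀ i j, i ≠ j → ArcDisjoint (c i) (c j)) ∨
    (∃ F : Set (V × V), IsFAS A F ∧ F.ncard ≤ (2 * k + 1) * (k - 1)) := by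
  obtain ⟨c, hc, -⟩ | ⟨F, hF, hcard⟩ := hT.exists_arcDisjoint_cycles_or_isFAS k
  · exact Or.inl ⟨c, hc⟩
  · refine Or.inr ⟨F, hF, hcard.trans ?_⟩
    rw [Nat.mul_comm]
    exact Nat.mul_le_mul_right _ (by omega)

/-- Every tournament either contains `k` arc-disjoint cycles or has a feedback arc
set of size at most `(2k+1)(k-1)`. -/
theorem stmt3 [Fintype V] (A : V → V → Prop) (hT : IsTournament A) (k : ℕ) :
    (∃ c : Fin k → DCycle A, ∀ i j, i ≠ j → ArcDisjoint (c i) (c j)) ∨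
    (∃ F : Set (V × V), IsFAS A F ∧ F.ncard ≤ (2 * k + 1) * (k - 1)) :=
  stmt3_general A hT k
end
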